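/- There exists a finite point set S in the Euclidean plane such that the relative neighborhood graph on S is not a monotonic search network: there exist p, q ∈ S with no monotonic path from p to q in the RNG. -/

import Mathlib

/-!
Take `p = (0,0)`, `q = (10,0)`, `a = (5,6)` and `b = (-1,5)`. Every step of a monotonic path
from `p` leaves `p` along an RNG edge towards a point strictly closer to `q`. The edge `pq` is
blocked by `a ∈ lune p q`, the edge `pa` is blocked by `b ∈ lune p a`, and `b` is farther from
`q` than `p` is, so no first step exists.
-/

/-- The lune of `p` and `q`: intersection of the two open balls of radius `δ(p,q)`. -/
def lune (p q : EuclideanSpace ℝ (Fin 2)) : Set (EuclideanSpace ℝ (Fin 2)) :=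
  Metric.ball p (dist p q) ∩ Metric.ball q (dist p q)

lemma mem_lune_iff_sq {p q r : EuclideanSpace ℝ (Fin 2)} :
    r ∈ lune p q ↔ dist r p ^ 2 < dist p q ^ 2 ∧ dist r q ^ 2 < dist p q ^ 2 := by
  simp only [lune, Set.mem_inter_iff, Metric.mem_ball,
    sq_lt_sq₀ dist_nonneg dist_nonneg]

lemma dist_sq_toLp (a b c d : ℝ) :
    dist !₂[a, b] !₂[c, d] ^ 2 = (a - c) ^ 2 + (b - d) ^ 2 := by
  rw [EuclideanSpace.dist_eq, Real.sq_sqrt (by positivity), Fin.sum_univ_two]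
  simp [Real.dist_eq, sq_abs]

lemma not_exists_monotone_rng_path {S : Finset (EuclideanSpace ℝ (Fin 2))}
    {p q : EuclideanSpace ℝ (Fin 2)} (hpq : p ≠ q)
    (hstep : ∀ r ∈ S, r ≠ p → (∀ s ∈ S, s ∉ lune p r) → dist p q ≤ dist r q) :
    ¬ ∃ (k : ℕ) (v : ℕ → EuclideanSpace ℝ (Fin 2)),
        v 0 = p ∧ v k = q ∧ (∀ i ≤ k, v i ∈ S) ∧
        (∀ i < k, v i ≠ v (i + 1) ∧ ∀ r ∈ S, r ∉ lune (v i) (v (i + 1))) ∧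
        (∀ i < k, dist (v (i + 1)) q < dist (v i) q) := by
  rintro ⟨k, v, rfl, hvk, hmem, hedge, hmono⟩
  have hk : 0 < k := Nat.pos_of_ne_zero fun hk0 ↦ hpq (hk0 ▸ hvk)
  obtain ⟨hne, hempty⟩ := hedge 0 hk
  exact (hstep (v 1) (hmem 1 hk) hne.symm hempty).not_gt (hmono 0 hk)

/-- There is a finite point set `S` in the plane whose RNG is not a
monotonic search network: some pair `p, q ∈ S` admits no monotonic path from `p` to
`q` in the RNG. -/
theorem rng_not_msnet :
    ∃ (S : Finset (EuclideanSpace ℝ (Fin 2))) (p q : EuclideanSpace ℝ (Fin 2)),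
      p ∈ S ∧ q ∈ S ∧ p ≠ q ∧
      ¬ ∃ (k : ℕ) (v : ℕ → EuclideanSpace ℝ (Fin 2)),
          v 0 = p ∧ v k = q ∧ (∀ i ≤ k, v i ∈ S) ∧
          (∀ i < k, v i ≠ v (i + 1) ∧ ∀ r ∈ S, r ∉ lune (v i) (v (i + 1))) ∧
          (∀ i < k, dist (v (i + 1)) q < dist (v i) q) := by
  set p : EuclideanSpace ℝ (Fin 2) := !₂[0, 0]
  set q : EuclideanSpace ℝ (Fin 2) := !₂[10, 0]
  set a : EuclideanSpace ℝ (Fin 2) := !₂[5, 6]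
  set b : EuclideanSpace ℝ (Fin 2) := !₂[-1, 5]
  have hpq : p ≠ q := by
    rw [← dist_pos, ← sq_lt_sq₀ le_rfl dist_nonneg]
    simp only [p, q, dist_sq_toLp]; norm_num
  refine ⟨{p, q, a, b}, p, q, by simp, by simp, hpq, not_exists_monotone_rng_path hpq ?_⟩
  simp only [Finset.mem_insert, Finset.mem_singleton]
  rintro r (rfl | rfl | rfl | rfl) hr hempty
  · exact absurd rfl hr
  · refine absurd (mem_lune_iff_sq.mpr ?_) (hempty a (by simp))
    simp only [p, q, a, dist_sq_toLp]; norm_num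
  · refine absurd (mem_lune_iff_sq.mpr ?_) (hempty b (by simp))
    simp only [p, a, b, dist_sq_toLp]; norm_num
  · rw [← sq_le_sq₀ dist_nonneg dist_nonneg]
    simp only [p, q, b, dist_sq_toLp]; norm_num
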